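/- Verification theorem for a two-layer NN (S-procedure): Let Ψ(x) = W¹ φ(W⁰x + b⁰) + b¹ where φ satisfies, for all inputs v arising from x ∈ X, the quadratic constraint [v; φ(v)]ᵀ Q_blk [v; φ(v)] ≥ 0 with Q_blk = [[−2A_φB_φM, (A_φ+B_φ)M],[(A_φ+B_φ)M, −2M]], M diagonal nonnegative. Suppose X satisfies a QC with matrix P ([x;1]ᵀP[x;1] ≥ 0 on X) and the output spec set is S = {(x,y) : [x;y;1]ᵀ S_mat [x;y;1] ≤ 0}. If the matrix inequality M_X(P) + M_Y(S_mat) + M_Ψ(Q_blk) ⪯ 0 holds (where M_X, M_Y, M_Ψ are the lifted versions defined via the embedding of (x, φ(W⁰x+b⁰), 1)), then Ψ(x) ∈ S(x) for all x ∈ X, i.e., [x; Ψ(x); 1]ᵀ S_mat [x; Ψ(x); 1] ≤ 0 for all x ∈ X. -/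

import Mathlib

/-! S-procedure: evaluate the quadratic form of the LMI at `ξ = [x; φ(W⁰x + b⁰); 1]`. Each lift
`Eᵀ Q E` contributes `(E ξ)ᵀ Q (E ξ)`, and `E ξ` is exactly the vector of the input QC, of the
output specification and of the activation QC at `x`. The input and activation terms are
nonnegative for `x ∈ X`, so negative semidefiniteness of the sum forces the output term to be
nonpositive. -/

open Matrix

/-- Selector mapping `ξ = [x; x¹; 1] ↦ [x; 1]`. -/
def Ex (n0 n1 : ℕ) : Matrix (Fin n0 ⊕ Unit) ((Fin n0 ⊕ Fin n1) ⊕ Unit) ℝ :=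
  Matrix.of fun i j =>
    match i, j with
    | Sum.inl a, Sum.inl (Sum.inl b) => if a = b then 1 else 0
    | Sum.inr _, Sum.inr _ => 1
    | _, _ => 0

/-- Linear map `ξ = [x; x¹; 1] ↦ [W⁰x + b⁰; x¹]`. -/
def Ephi {n0 n1 : ℕ} (W0 : Matrix (Fin n1) (Fin n0) ℝ) (b0 : Fin n1 → ℝ) :
    Matrix (Fin n1 ⊕ Fin n1) ((Fin n0 ⊕ Fin n1) ⊕ Unit) ℝ :=
  Matrix.of fun i j =>
    match i, j with
    | Sum.inl a, Sum.inl (Sum.inl b) => W0 a b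
    | Sum.inl a, Sum.inr _ => b0 a
    | Sum.inr a, Sum.inl (Sum.inr b) => if a = b then 1 else 0
    | _, _ => 0

/-- Linear map `ξ = [x; x¹; 1] ↦ [x; W¹x¹ + b¹; 1]`. -/
def Ey {n0 n1 ny : ℕ} (W1 : Matrix (Fin ny) (Fin n1) ℝ) (b1 : Fin ny → ℝ) :
    Matrix ((Fin n0 ⊕ Fin ny) ⊕ Unit) ((Fin n0 ⊕ Fin n1) ⊕ Unit) ℝ :=
  Matrix.of fun i j =>
    match i, j with
    | Sum.inl (Sum.inl a), Sum.inl (Sum.inl b) => if a = b then 1 else 0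
    | Sum.inl (Sum.inr a), Sum.inl (Sum.inr b) => W1 a b
    | Sum.inl (Sum.inr a), Sum.inr _ => b1 a
    | Sum.inr _, Sum.inr _ => 1
    | _, _ => 0

theorem dotProduct_transpose_mul_mul_mulVec {m n R : Type*} [Fintype m] [Fintype n]
    [CommSemiring R] (A : Matrix m n R) (Q : Matrix m m R) (v : n → R) :
    v ⬝ᵥ ((Aᵀ * Q * A) *ᵥ v) = (A *ᵥ v) ⬝ᵥ (Q *ᵥ (A *ᵥ v)) := by
  rw [← mulVec_mulVec, ← mulVec_mulVec, dotProduct_mulVec, vecMul_transpose]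

theorem dotProduct_mulVec_nonpos_of_posSemidef_neg_add {n R : Type*} [Fintype n] [CommRing R]
    [LinearOrder R] [IsStrictOrderedRing R] [StarRing R] [TrivialStar R]
    {A B C : Matrix n n R} (hM : (-(A + B + C)).PosSemidef) (v : n → R)
    (hA : 0 ≤ v ⬝ᵥ (A *ᵥ v)) (hC : 0 ≤ v ⬝ᵥ (C *ᵥ v)) :
    v ⬝ᵥ (B *ᵥ v) ≤ 0 := by
  have hsum := hM.dotProduct_mulVec_nonneg v
  rw [star_trivial, neg_mulVec, dotProduct_neg, add_mulVec, add_mulVec, dotProduct_add,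
    dotProduct_add] at hsum
  linarith

theorem Ex_mulVec {n0 n1 : ℕ} (x : Fin n0 → ℝ) (x1 : Fin n1 → ℝ) :
    Ex n0 n1 *ᵥ Sum.elim (Sum.elim x x1) (fun _ => 1) = Sum.elim x (fun _ => 1) := by
  ext (a | _) <;> simp [Ex, mulVec, dotProduct, Fintype.sum_sum_type]

theorem Ephi_mulVec {n0 n1 : ℕ} (W0 : Matrix (Fin n1) (Fin n0) ℝ) (b0 : Fin n1 → ℝ)
    (x : Fin n0 → ℝ) (x1 : Fin n1 → ℝ) :
    Ephi W0 b0 *ᵥ Sum.elim (Sum.elim x x1) (fun _ => 1) = Sum.elim (W0 *ᵥ x + b0) x1 := by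
  ext (a | a) <;> simp [Ephi, mulVec, dotProduct, Fintype.sum_sum_type]

theorem Ey_mulVec {n0 n1 ny : ℕ} (W1 : Matrix (Fin ny) (Fin n1) ℝ) (b1 : Fin ny → ℝ)
    (x : Fin n0 → ℝ) (x1 : Fin n1 → ℝ) :
    Ey (n0 := n0) W1 b1 *ᵥ Sum.elim (Sum.elim x x1) (fun _ => 1)
      = Sum.elim (Sum.elim x (W1 *ᵥ x1 + b1)) (fun _ => 1) := by
  ext ((a | a) | _) <;> simp [Ey, mulVec, dotProduct, Fintype.sum_sum_type]

theorem two_layer_verification_general {n0 n1 ny : ℕ}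
    (W0 : Matrix (Fin n1) (Fin n0) ℝ) (W1 : Matrix (Fin ny) (Fin n1) ℝ)
    (b0 : Fin n1 → ℝ) (b1 : Fin ny → ℝ)
    (φ : (Fin n1 → ℝ) → (Fin n1 → ℝ))
    (X : Set (Fin n0 → ℝ))
    (P : Matrix (Fin n0 ⊕ Unit) (Fin n0 ⊕ Unit) ℝ)
    (Smat : Matrix ((Fin n0 ⊕ Fin ny) ⊕ Unit) ((Fin n0 ⊕ Fin ny) ⊕ Unit) ℝ)
    (a β μ : Fin n1 → ℝ)
    -- input QC
    (hX : ∀ x ∈ X, 0 ≤ Sum.elim x (fun _ => 1) ⬝ᵥ (P *ᵥ Sum.elim x (fun _ => 1)))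
    -- activation QC along trajectories of the network
    (hφ : ∀ x ∈ X,
      0 ≤ Sum.elim (W0 *ᵥ x + b0) (φ (W0 *ᵥ x + b0)) ⬝ᵥ
        ((Matrix.fromBlocks
            ((-2 : ℝ) • (Matrix.diagonal a * Matrix.diagonal β * Matrix.diagonal μ))
            ((Matrix.diagonal a + Matrix.diagonal β) * Matrix.diagonal μ)
            ((Matrix.diagonal a + Matrix.diagonal β) * Matrix.diagonal μ)
            ((-2 : ℝ) • Matrix.diagonal μ))
          *ᵥ Sum.elim (W0 *ᵥ x + b0) (φ (W0 *ᵥ x + b0))))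
    -- the matrix inequality M_X(P) + M_Y(S) + M_Ψ(Q) ⪯ 0
    (hLMI : (-((Ex n0 n1)ᵀ * P * Ex n0 n1
        + (Ey (n0 := n0) W1 b1)ᵀ * Smat * Ey (n0 := n0) W1 b1
        + (Ephi W0 b0)ᵀ *
            (Matrix.fromBlocks
              ((-2 : ℝ) • (Matrix.diagonal a * Matrix.diagonal β * Matrix.diagonal μ))
              ((Matrix.diagonal a + Matrix.diagonal β) * Matrix.diagonal μ)
              ((Matrix.diagonal a + Matrix.diagonal β) * Matrix.diagonal μ)
              ((-2 : ℝ) • Matrix.diagonal μ)) * Ephi W0 b0)).PosSemidef) :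
    ∀ x ∈ X,
      Sum.elim (Sum.elim x (W1 *ᵥ φ (W0 *ᵥ x + b0) + b1)) (fun _ => 1) ⬝ᵥ
        (Smat *ᵥ Sum.elim (Sum.elim x (W1 *ᵥ φ (W0 *ᵥ x + b0) + b1)) (fun _ => 1)) ≤ 0 := by
  intro x hx
  have hout := dotProduct_mulVec_nonpos_of_posSemidef_neg_add hLMI
    (Sum.elim (Sum.elim x (φ (W0 *ᵥ x + b0))) (fun _ => 1))
    (by rw [dotProduct_transpose_mul_mul_mulVec, Ex_mulVec]; exact hX x hx)
    (by rw [dotProduct_transpose_mul_mul_mulVec, Ephi_mulVec]; exact hφ x hx)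
  rwa [dotProduct_transpose_mul_mul_mulVec, Ey_mulVec] at hout

/-- Verification theorem for a two-layer NN via the S-procedure: if the input set satisfies
the QC with matrix `P`, the activation satisfies the sector QC with block matrix `Q_blk`,
and the LMI `M_X(P) + M_Y(S) + M_Ψ(Q_blk) ⪯ 0` holds, then `Ψ(x) ∈ S(x)` for all `x ∈ X`. -/
theorem two_layer_verification {n0 n1 ny : ℕ}
    (W0 : Matrix (Fin n1) (Fin n0) ℝ) (W1 : Matrix (Fin ny) (Fin n1) ℝ)
    (b0 : Fin n1 → ℝ) (b1 : Fin ny → ℝ)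
    (φ : (Fin n1 → ℝ) → (Fin n1 → ℝ))
    (X : Set (Fin n0 → ℝ))
    (P : Matrix (Fin n0 ⊕ Unit) (Fin n0 ⊕ Unit) ℝ) (hPs : P.IsSymm)
    (Smat : Matrix ((Fin n0 ⊕ Fin ny) ⊕ Unit) ((Fin n0 ⊕ Fin ny) ⊕ Unit) ℝ)
    (hSs : Smat.IsSymm)
    (a β μ : Fin n1 → ℝ) (hμ : ∀ i, 0 ≤ μ i)
    -- input QC
    (hX : ∀ x ∈ X, 0 ≤ Sum.elim x (fun _ => 1) ⬝ᵥ (P *ᵥ Sum.elim x (fun _ => 1)))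
    -- activation QC along trajectories of the network
    (hφ : ∀ x ∈ X,
      0 ≤ Sum.elim (W0 *ᵥ x + b0) (φ (W0 *ᵥ x + b0)) ⬝ᵥ
        ((Matrix.fromBlocks
            ((-2 : ℝ) • (Matrix.diagonal a * Matrix.diagonal β * Matrix.diagonal μ))
            ((Matrix.diagonal a + Matrix.diagonal β) * Matrix.diagonal μ)
            ((Matrix.diagonal a + Matrix.diagonal β) * Matrix.diagonal μ)
            ((-2 : ℝ) • Matrix.diagonal μ))
          *ᵥ Sum.elim (W0 *ᵥ x + b0) (φ (W0 *ᵥ x + b0))))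
    -- the matrix inequality M_X(P) + M_Y(S) + M_Ψ(Q) ⪯ 0
    (hLMI : (-((Ex n0 n1)ᵀ * P * Ex n0 n1
        + (Ey (n0 := n0) W1 b1)ᵀ * Smat * Ey (n0 := n0) W1 b1
        + (Ephi W0 b0)ᵀ *
            (Matrix.fromBlocks
              ((-2 : ℝ) • (Matrix.diagonal a * Matrix.diagonal β * Matrix.diagonal μ))
              ((Matrix.diagonal a + Matrix.diagonal β) * Matrix.diagonal μ)
              ((Matrix.diagonal a + Matrix.diagonal β) * Matrix.diagonal μ)
              ((-2 : ℝ) • Matrix.diagonal μ)) * Ephi W0 b0)).PosSemidef) :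
    ∀ x ∈ X,
      Sum.elim (Sum.elim x (W1 *ᵥ φ (W0 *ᵥ x + b0) + b1)) (fun _ => 1) ⬝ᵥ
        (Smat *ᵥ Sum.elim (Sum.elim x (W1 *ᵥ φ (W0 *ᵥ x + b0) + b1)) (fun _ => 1)) ≤ 0 :=
  two_layer_verification_general W0 W1 b0 b1 φ X P Smat a β μ hX hφ hLMI
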